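/- arXiv:1104.2550 — 3 statements merged into one kernel-verified Lean document; each statement's English description precedes it below -/
import Mathlib

section
/- Let P be a probability measure on a space Ω, D ⊆ Ω measurable with 0 < P[D] < 1, and G a real number with 1 ≤ G ≤ P[D]^{-1}. Define a new probability measure Q by dQ = G·dP on D and dQ = ((1−G·P[D])/(1−P[D]))·dP on Ω\D, and let ξ̃ = 𝟙_D/G. Then the expectation of ξ̃ under Q equals P[D], and Var_P(𝟙_D)/Var_Q(ξ̃) = (1−P[D])/(G^{-1}−P[D]). In particular, when G = P[D]^{-1} the variance of ξ̃ under Q is zero. -/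
open MeasureTheory
open scoped Classical ENNReal

/-!
Everything is supported on `D`, where `Q` is `G • P` and `ξ̃` is the constant `G⁻¹`. Hence
`Q[ξ̃] = G⁻¹ · G P[D]` and `Q[ξ̃²] = G⁻² · G P[D] = P[D] / G`, while `P[𝟙_D²] = P[𝟙_D] = P[D]`;
both variances have the form `P[D] · (c - P[D])` and the common factor `P[D] > 0` cancels.
-/

namespace MeasureTheory

lemma withDensity_apply_eq_mul_of_eqOn {α : Type*} [MeasurableSpace α] {μ : Measure α}
    {f : α → ℝ≥0∞} {s : Set α} {c : ℝ≥0∞} (hs : MeasurableSet s) (hf : Set.EqOn f (fun _ => c) s) :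
    μ.withDensity f s = c * μ s := by
  rw [withDensity_apply _ hs, setLIntegral_congr_fun hs hf, setLIntegral_const]

lemma integral_sq_sub_sq_integral_indicator_const {α : Type*} [MeasurableSpace α]
    (μ : Measure α) {s : Set α} (hs : MeasurableSet s) (c : ℝ) :
    ∫ x, (s.indicator (fun _ => c) x) ^ 2 ∂μ - (∫ x, s.indicator (fun _ => c) x ∂μ) ^ 2
      = c ^ 2 * μ.real s - (c * μ.real s) ^ 2 := by
  have hsq : (fun x => (s.indicator (fun _ => c) x) ^ 2) = s.indicator (fun _ => c ^ 2) :=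
    (Set.indicator_comp_of_zero (g := fun y : ℝ => y ^ 2) (by norm_num)).symm
  rw [hsq, integral_indicator_const _ hs, integral_indicator_const _ hs, smul_eq_mul,
    smul_eq_mul, mul_comm (μ.real s), mul_comm (μ.real s)]

end MeasureTheory

theorem stmt0_general {Ω : Type*} [MeasurableSpace Ω] (P : Measure Ω) [IsProbabilityMeasure P]
    (D : Set Ω) (hD : MeasurableSet D)
    (hD0 : 0 < (P D).toReal)
    (G : ℝ) (hG1 : 1 ≤ G)
    (Q : Measure Ω)
    (hQ : Q = P.withDensity (fun ω => if ω ∈ D then ENNReal.ofReal G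
        else ENNReal.ofReal ((1 - G * (P D).toReal) / (1 - (P D).toReal))))
    (ξ : Ω → ℝ)
    (hξ : ξ = fun ω => (Set.indicator D (fun _ => (1:ℝ)) ω) / G) :
    (∫ ω, ξ ω ∂Q = (P D).toReal) ∧
    ((∫ ω, (Set.indicator D (fun _ => (1:ℝ)) ω)^2 ∂P
        - (∫ ω, Set.indicator D (fun _ => (1:ℝ)) ω ∂P)^2) /
      (∫ ω, (ξ ω)^2 ∂Q - (∫ ω, ξ ω ∂Q)^2)
      = (1 - (P D).toReal) / (G⁻¹ - (P D).toReal)) ∧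
    (G = ((P D).toReal)⁻¹ → ∫ ω, (ξ ω)^2 ∂Q - (∫ ω, ξ ω ∂Q)^2 = 0) := by
  set p := (P D).toReal
  have hG0 : 0 < G := one_pos.trans_le hG1
  have hQD : Q.real D = G * p := by
    rw [measureReal_def, hQ, withDensity_apply_eq_mul_of_eqOn hD (fun ω hω => if_pos hω),
      ENNReal.toReal_mul, ENNReal.toReal_ofReal hG0.le]
  have hξD : ξ = D.indicator (fun _ => G⁻¹) := by
    rw [hξ]
    ext ω
    by_cases hω : ω ∈ D <;> simp [hω]
  have hmeanQ : ∫ ω, ξ ω ∂Q = p := by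
    rw [hξD, integral_indicator_const _ hD, hQD, smul_eq_mul]
    field_simp
  have hvarQ : ∫ ω, (ξ ω)^2 ∂Q - (∫ ω, ξ ω ∂Q)^2 = p * (G⁻¹ - p) := by
    rw [hξD, integral_sq_sub_sq_integral_indicator_const Q hD, hQD]
    field_simp
  have hvarP : ∫ ω, (D.indicator (fun _ => (1:ℝ)) ω)^2 ∂P
      - (∫ ω, D.indicator (fun _ => (1:ℝ)) ω ∂P)^2 = p * (1 - p) := by
    rw [integral_sq_sub_sq_integral_indicator_const P hD, measureReal_def]
    ring
  refine ⟨hmeanQ, ?_, fun hGp => ?_⟩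
  · rw [hvarP, hvarQ, mul_div_mul_left _ _ hD0.ne']
  · rw [hvarQ, hGp, inv_inv, sub_self, mul_zero]

theorem stmt0 {Ω : Type*} [MeasurableSpace Ω] (P : Measure Ω) [IsProbabilityMeasure P]
    (D : Set Ω) (hD : MeasurableSet D)
    (hD0 : 0 < (P D).toReal) (hD1 : (P D).toReal < 1)
    (G : ℝ) (hG1 : 1 ≤ G) (hG2 : G ≤ ((P D).toReal)⁻¹)
    (Q : Measure Ω)
    (hQ : Q = P.withDensity (fun ω => if ω ∈ D then ENNReal.ofReal G
        else ENNReal.ofReal ((1 - G * (P D).toReal) / (1 - (P D).toReal))))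
    (ξ : Ω → ℝ)
    (hξ : ξ = fun ω => (Set.indicator D (fun _ => (1:ℝ)) ω) / G) :
    (∫ ω, ξ ω ∂Q = (P D).toReal) ∧
    ((∫ ω, (Set.indicator D (fun _ => (1:ℝ)) ω)^2 ∂P
        - (∫ ω, Set.indicator D (fun _ => (1:ℝ)) ω ∂P)^2) /
      (∫ ω, (ξ ω)^2 ∂Q - (∫ ω, ξ ω ∂Q)^2)
      = (1 - (P D).toReal) / (G⁻¹ - (P D).toReal)) ∧
    (G = ((P D).toReal)⁻¹ → ∫ ω, (ξ ω)^2 ∂Q - (∫ ω, ξ ω ∂Q)^2 = 0) :=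
  stmt0_general P D hD hD0 G hG1 Q hQ ξ hξ
end

section
/- In the setting of the importance-sampled measure Q (dQ = b·dP on B, dQ = ((1−b·P[B])/(1−P[B]))·dP on B^c) with ξ̃ = 𝟙_D scaled by the Radon–Nikodym derivative dP/dQ, set β = b·P[D], γ = P[B]/P[D], and a = ((1−γ·P[D])/P[B|D])·((1−P[B|D])/P[D]). Then Var_Q(ξ̃) = P[D]²·( P[B|D]·(1/β + a/(1−γβ)) − 1 ). -/
/-!
With `dQ = ρ dP` for a positive density `ρ`, the estimator is `ξ̃ = 𝟙_D / ρ`, so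
`E_Q[ξ̃] = P[D]` and `E_Q[ξ̃²] = E_P[𝟙_D / ρ]`. For the two-level density (`b` on `B`, `c` on `Bᶜ`)
the latter is `P[B ∩ D] / b + P[Bᶜ ∩ D] / c`; the stated formula is the resulting variance
rewritten through `P[D] = P[B ∩ D] + P[Bᶜ ∩ D]`.
-/
open MeasureTheory
open scoped Classical ENNReal

section ImportanceSampling

variable {Ω : Type*} [MeasurableSpace Ω] {P : Measure Ω} {ρ : Ω → ℝ}

lemma integral_withDensity_ofReal (hρ : Measurable ρ) (g : Ω → ℝ) :
    ∫ ω, g ω ∂P.withDensity (fun ω => ENNReal.ofReal (ρ ω)) = ∫ ω, max (ρ ω) 0 * g ω ∂P := by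
  rw [integral_withDensity_eq_integral_toReal_smul hρ.ennreal_ofReal
    (.of_forall fun _ => ENNReal.ofReal_lt_top)]
  simp only [ENNReal.toReal_ofReal', smul_eq_mul]

lemma integral_indicator_inv_withDensity (hρ : Measurable ρ) (hρ0 : ∀ ω, 0 < ρ ω)
    {D : Set Ω} (hD : MeasurableSet D) :
    ∫ ω, D.indicator (fun ω => (ρ ω)⁻¹) ω ∂P.withDensity (fun ω => ENNReal.ofReal (ρ ω))
      = P.real D := by
  rw [integral_withDensity_ofReal hρ, ← integral_indicator_one hD]
  congr 1 with ω
  by_cases hω : ω ∈ D <;> simp [hω, max_eq_left (hρ0 ω).le, (hρ0 ω).ne']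

lemma integral_sq_indicator_inv_withDensity (hρ : Measurable ρ) (hρ0 : ∀ ω, 0 < ρ ω)
    {D : Set Ω} (hD : MeasurableSet D) :
    ∫ ω, (D.indicator (fun ω => (ρ ω)⁻¹) ω) ^ 2 ∂P.withDensity (fun ω => ENNReal.ofReal (ρ ω))
      = ∫ ω in D, (ρ ω)⁻¹ ∂P := by
  rw [integral_withDensity_ofReal hρ, ← integral_indicator hD]
  congr 1 with ω
  by_cases hω : ω ∈ D
  · simp [hω, max_eq_left (hρ0 ω).le]
    field_simp [(hρ0 ω).ne']
  · simp [hω]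

lemma setIntegral_ite_const [IsFiniteMeasure P] {B D : Set Ω} (hB : MeasurableSet B) (x y : ℝ) :
    ∫ ω in D, (if ω ∈ B then x else y) ∂P = x * P.real (B ∩ D) + y * P.real (Bᶜ ∩ D) := by
  have hsplit : (fun ω => if ω ∈ B then x else y)
      = fun ω => B.indicator (fun _ => x) ω + Bᶜ.indicator (fun _ => y) ω := by
    funext ω
    by_cases hω : ω ∈ B <;> simp [hω]
  rw [hsplit, integral_add ((integrable_const x).indicator hB)
      ((integrable_const y).indicator hB.compl), integral_indicator_const _ hB,
    integral_indicator_const _ hB.compl, measureReal_restrict_apply hB,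
    measureReal_restrict_apply hB.compl, smul_eq_mul, smul_eq_mul, mul_comm x, mul_comm y]

lemma integral_sq_sub_sq_integral_withDensity_ite [IsFiniteMeasure P] {B D : Set Ω}
    (hB : MeasurableSet B) (hD : MeasurableSet D) {x y : ℝ} (hx : 0 < x) (hy : 0 < y) :
    let Q := P.withDensity fun ω => if ω ∈ B then ENNReal.ofReal x else ENNReal.ofReal y
    let ξ := D.indicator fun ω => if ω ∈ B then x⁻¹ else y⁻¹
    ∫ ω, ξ ω ^ 2 ∂Q - (∫ ω, ξ ω ∂Q) ^ 2
      = x⁻¹ * P.real (B ∩ D) + y⁻¹ * P.real (Bᶜ ∩ D) - P.real D ^ 2 := by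
  set ρ : Ω → ℝ := fun ω => if ω ∈ B then x else y
  have hρ : Measurable ρ := Measurable.ite hB measurable_const measurable_const
  have hρ0 : ∀ ω, 0 < ρ ω := fun ω => by
    by_cases hω : ω ∈ B <;> simp [ρ, hω, hx, hy]
  intro Q ξ
  have hQ : Q = P.withDensity fun ω => ENNReal.ofReal (ρ ω) := by
    simp only [Q, ρ, apply_ite ENNReal.ofReal]
  have hξ : ξ = D.indicator fun ω => (ρ ω)⁻¹ := by
    simp only [ξ, ρ, apply_ite Inv.inv]
  rw [hQ, hξ, integral_indicator_inv_withDensity hρ hρ0 hD,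
    integral_sq_indicator_inv_withDensity hρ hρ0 hD]
  simp only [ρ, apply_ite Inv.inv]
  rw [setIntegral_ite_const hB]

end ImportanceSampling

theorem stmt2_general {Ω : Type*} [MeasurableSpace Ω] (P : Measure Ω) [IsProbabilityMeasure P]
    (D B : Set Ω) (hD : MeasurableSet D) (hB : MeasurableSet B)
    (hB1 : (P B).toReal < 1)
    (hBD : 0 < (P (B ∩ D)).toReal)
    (b : ℝ) (hb : 0 < b) (hbB : b * (P B).toReal < 1)
    (Q : Measure Ω)
    (hQ : Q = P.withDensity (fun ω => if ω ∈ B then ENNReal.ofReal b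
        else ENNReal.ofReal ((1 - b * (P B).toReal) / (1 - (P B).toReal))))
    (ξ : Ω → ℝ)
    (hξ : ξ = fun ω => if ω ∈ B then (1 / b) * Set.indicator D (fun _ => (1:ℝ)) ω
        else ((1 - (P B).toReal) / (1 - b * (P B).toReal)) * Set.indicator D (fun _ => (1:ℝ)) ω) :
    ∫ ω, (ξ ω)^2 ∂Q - (∫ ω, ξ ω ∂Q)^2
      = ((P D).toReal)^2 *
        (((P (B ∩ D)).toReal / (P D).toReal) *
            (1 / (b * (P D).toReal)
              + ((((1 - ((P B).toReal / (P D).toReal) * (P D).toReal)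
                    / ((P (B ∩ D)).toReal / (P D).toReal))
                  * ((1 - (P (B ∩ D)).toReal / (P D).toReal) / (P D).toReal))
                / (1 - ((P B).toReal / (P D).toReal) * (b * (P D).toReal))))
          - 1) := by
  simp only [← measureReal_def] at *
  have hc : 0 < (1 - b * P.real B) / (1 - P.real B) := div_pos (by linarith) (by linarith)
  have hξ' : ξ = D.indicator fun ω =>
      if ω ∈ B then b⁻¹ else ((1 - b * P.real B) / (1 - P.real B))⁻¹ := by
    funext ω
    by_cases hωB : ω ∈ B <;> by_cases hωD : ω ∈ D <;> simp [hξ, hωB, hωD]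
  have hPD : P.real D = P.real (B ∩ D) + P.real (Bᶜ ∩ D) := by
    rw [Set.inter_comm B, Set.inter_comm Bᶜ, ← Set.sdiff_eq, measureReal_inter_add_sdiff hB]
  have hq : 0 ≤ P.real (Bᶜ ∩ D) := measureReal_nonneg
  rw [hQ, hξ', integral_sq_sub_sq_integral_withDensity_ite hB hD hb hc, hPD, inv_div]
  field_simp
  ring

theorem stmt2 {Ω : Type*} [MeasurableSpace Ω] (P : Measure Ω) [IsProbabilityMeasure P]
    (D B : Set Ω) (hD : MeasurableSet D) (hB : MeasurableSet B)
    (hD0 : 0 < (P D).toReal) (hB0 : 0 < (P B).toReal) (hB1 : (P B).toReal < 1)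
    (hBD : 0 < (P (B ∩ D)).toReal)
    (b : ℝ) (hb : 0 < b) (hbB : b * (P B).toReal < 1)
    (Q : Measure Ω)
    (hQ : Q = P.withDensity (fun ω => if ω ∈ B then ENNReal.ofReal b
        else ENNReal.ofReal ((1 - b * (P B).toReal) / (1 - (P B).toReal))))
    (ξ : Ω → ℝ)
    (hξ : ξ = fun ω => if ω ∈ B then (1 / b) * Set.indicator D (fun _ => (1:ℝ)) ω
        else ((1 - (P B).toReal) / (1 - b * (P B).toReal)) * Set.indicator D (fun _ => (1:ℝ)) ω) :
    ∫ ω, (ξ ω)^2 ∂Q - (∫ ω, ξ ω ∂Q)^2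
      = ((P D).toReal)^2 *
        (((P (B ∩ D)).toReal / (P D).toReal) *
            (1 / (b * (P D).toReal)
              + ((((1 - ((P B).toReal / (P D).toReal) * (P D).toReal)
                    / ((P (B ∩ D)).toReal / (P D).toReal))
                  * ((1 - (P (B ∩ D)).toReal / (P D).toReal) / (P D).toReal))
                / (1 - ((P B).toReal / (P D).toReal) * (b * (P D).toReal))))
          - 1) :=
  stmt2_general P D B hD hB hB1 hBD b hb hbB Q hQ ξ hξ
end

section
/- For f ∈ C² and the Taylor remainder R(a,b) := f(b) − f(a) − f′(a)(b−a), one has the double-integral representation R(a,b) = (b−a)² ∫₀¹ ∫₀^s f″(a + t(b−a)) dt ds, and |R(a,b)| ≤ (1/2)(b−a)²·sup|f″|. Moreover, if f is C^{k+2}, the function (a,b) ↦ R(a,b)/(b−a)² extends to a C^k function of (a,b). -/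
/-! Taylor's formula with integral remainder gives
`f b - f a - f' a (b - a) = (b - a)² ∫₀¹ (1 - t) f''(a + t (b - a)) dt`. Integrating by parts turns
the weight `1 - t` into the iterated integral `∫₀¹ ∫₀ˢ`, and `∫₀¹ (1 - t) dt = 1/2` gives the bound.
The integral on the right makes sense on the diagonal `a = b` too, where it equals `f'' a / 2`, and
differentiating under the integral sign shows that it is `C^k` in `(a, b)` when `f''` is `C^k`. -/

open intervalIntegral Metric Set Function

section ParametricIntegral

universe u

-- One universe for `E` and `G`: the induction below replaces `G` by `E →L[ℝ] G`.
variable {E G : Type u} [NormedAddCommGroup E] [NormedSpace ℝ E]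
  [NormedAddCommGroup G] [NormedSpace ℝ G]

theorem contDiff_uncurry_fderiv_left {n : ℕ} {F : E → ℝ → G}
    (hF : ContDiff ℝ (n + 1) (uncurry F)) :
    ContDiff ℝ n (uncurry fun x t => fderiv ℝ (fun y => F y t) x) :=
  ContDiff.fderiv (f := fun (p : E × ℝ) y => F y p.2)
    (hF.comp (contDiff_snd.prodMk (contDiff_snd.comp contDiff_fst))) contDiff_fst le_rfl

variable [ProperSpace E]

theorem hasFDerivAt_intervalIntegral_of_contDiff {F : E → ℝ → G}
    (hF : ContDiff ℝ 1 (uncurry F)) (a b : ℝ) (x₀ : E) :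
    HasFDerivAt (fun x => ∫ t in a..b, F x t)
      (∫ t in a..b, fderiv ℝ (fun x => F x t) x₀) x₀ := by
  have hF' := (contDiff_uncurry_fderiv_left (n := 0) (by simpa using hF)).continuous
  have hFx : ∀ x, Continuous (F x) := fun x =>
    hF.continuous.comp (continuous_const.prodMk continuous_id)
  have hFt : ∀ t, Differentiable ℝ (fun x => F x t) := fun t =>
    (hF.comp (contDiff_id.prodMk contDiff_const)).differentiable one_ne_zero
  obtain ⟨C, hC⟩ := ((isCompact_closedBall x₀ 1).prod isCompact_uIcc).exists_bound_of_continuousOn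
    hF'.continuousOn
  refine hasFDerivAt_integral_of_dominated_of_fderiv_le (ball_mem_nhds x₀ one_pos)
    (F := F) (F' := fun x t => fderiv ℝ (fun y => F y t) x)
    (bound := fun _ => C) ?_ ?_ ?_ ?_ intervalIntegrable_const ?_
  · exact .of_forall fun x => (hFx x).aestronglyMeasurable
  · exact (hFx x₀).intervalIntegrable _ _
  · exact (hF'.comp (continuous_const.prodMk continuous_id)).aestronglyMeasurable
  · exact .of_forall fun t ht x hx =>
      hC (x, t) ⟨ball_subset_closedBall hx, uIoc_subset_uIcc ht⟩
  · exact .of_forall fun t _ x _ => (hFt t x).hasFDerivAt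

theorem contDiff_intervalIntegral_of_contDiff_uncurry {n : ℕ} {F : E → ℝ → G}
    (hF : ContDiff ℝ n (uncurry F)) (a b : ℝ) :
    ContDiff ℝ n (fun x => ∫ t in a..b, F x t) := by
  induction n generalizing G with
  | zero => exact contDiff_zero.2 (continuous_parametric_intervalIntegral_of_continuous'
      (contDiff_zero.1 hF) a b)
  | succ n ih =>
    have hF1 : ContDiff ℝ 1 (uncurry F) := hF.of_le (by exact_mod_cast n.succ_pos)
    have hderiv : fderiv ℝ (fun x => ∫ t in a..b, F x t)
        = fun x => ∫ t in a..b, fderiv ℝ (fun y => F y t) x :=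
      funext fun x => (hasFDerivAt_intervalIntegral_of_contDiff hF1 a b x).fderiv
    push_cast at hF ⊢
    rw [contDiff_succ_iff_fderiv]
    refine ⟨fun x => (hasFDerivAt_intervalIntegral_of_contDiff hF1 a b x).differentiableAt,
      by simp, ?_⟩
    rw [hderiv]
    exact ih (contDiff_uncurry_fderiv_left hF)

end ParametricIntegral

theorem integral_integral_eq_integral_sub_mul {φ : ℝ → ℝ} (hφ : Continuous φ) (a b : ℝ) :
    ∫ s in a..b, ∫ t in a..s, φ t = ∫ t in a..b, (b - t) * φ t := by
  have h := integral_mul_deriv_eq_deriv_mul (a := a) (b := b) (u := fun s => ∫ t in a..s, φ t)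
    (v := fun s => s - b) (u' := φ) (v' := fun _ => 1)
    (fun s _ => (hφ.integral_hasStrictDerivAt a s).hasDerivAt)
    (fun s _ => (hasDerivAt_id s).sub_const b) (hφ.intervalIntegrable _ _) intervalIntegrable_const
  simp only [mul_one, integral_same, sub_self, mul_zero, zero_mul, zero_sub] at h
  rw [h, ← integral_neg]
  congr 1 with t
  ring

theorem integral_one_sub : ∫ t in (0:ℝ)..1, (1 - t) = 1 / 2 := by
  rw [integral_sub intervalIntegrable_const intervalIntegrable_id, integral_id]
  norm_num

theorem taylor_remainder_eq_integral {f : ℝ → ℝ} (hf : ContDiff ℝ 2 f) (a b : ℝ) :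
    f b - f a - deriv f a * (b - a)
      = (b - a) ^ 2 * ∫ t in (0:ℝ)..1, (1 - t) * deriv (deriv f) (a + t * (b - a)) := by
  have h := map_add_eq_sum_add_integral_iteratedFDeriv (n := 1) (x := a) (y := b - a)
    (fun t _ => hf.contDiffAt)
  simp only [add_sub_cancel, Nat.reduceAdd, iteratedFDeriv_apply_eq_iteratedDeriv_mul_prod,
    Finset.prod_const, Finset.card_univ, Fintype.card_fin, smul_eq_mul, Finset.sum_range_succ,
    Finset.range_one, Finset.sum_singleton, Nat.factorial_zero, Nat.cast_one, inv_one, pow_zero,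
    iteratedDeriv_zero, one_mul, Nat.factorial_one, pow_one, iteratedDeriv_succ] at h
  rw [h, ← integral_const_mul]
  ring_nf

theorem abs_taylor_remainder_le {f : ℝ → ℝ} (hf : ContDiff ℝ 2 f) {K : ℝ}
    (hK : ∀ x, |deriv (deriv f) x| ≤ K) (a b : ℝ) :
    |f b - f a - deriv f a * (b - a)| ≤ 1 / 2 * (b - a) ^ 2 * K := by
  have hint : ‖∫ t in (0:ℝ)..1, (1 - t) * deriv (deriv f) (a + t * (b - a))‖
      ≤ ∫ t in (0:ℝ)..1, (1 - t) * K := by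
    refine norm_integral_le_of_norm_le zero_le_one (.of_forall fun t ht => ?_)
      ((by fun_prop : Continuous fun t : ℝ => (1 - t) * K).intervalIntegrable _ _)
    rw [Real.norm_eq_abs, abs_mul, abs_of_nonneg (sub_nonneg.2 ht.2)]
    exact mul_le_mul_of_nonneg_left (hK _) (sub_nonneg.2 ht.2)
  rw [integral_mul_const, integral_one_sub, Real.norm_eq_abs] at hint
  calc |f b - f a - deriv f a * (b - a)|
      = (b - a) ^ 2 * |∫ t in (0:ℝ)..1, (1 - t) * deriv (deriv f) (a + t * (b - a))| := by
        rw [taylor_remainder_eq_integral hf, abs_mul, abs_of_nonneg (sq_nonneg _)]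
    _ ≤ (b - a) ^ 2 * (1 / 2 * K) := mul_le_mul_of_nonneg_left hint (sq_nonneg _)
    _ = 1 / 2 * (b - a) ^ 2 * K := by ring

theorem stmt13 (k : ℕ) (f : ℝ → ℝ) (hf2 : ContDiff ℝ 2 f)
    (K : ℝ) (hK : ∀ x, |deriv (deriv f) x| ≤ K) :
    (∀ a b : ℝ, f b - f a - deriv f a * (b - a)
      = (b - a)^2 * ∫ s in (0:ℝ)..1, ∫ t in (0:ℝ)..s, deriv (deriv f) (a + t * (b - a))) ∧
    (∀ a b : ℝ, |f b - f a - deriv f a * (b - a)| ≤ (1/2) * (b - a)^2 * K) ∧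
    (ContDiff ℝ ((k : ℕ∞) + 2) f →
      ∃ g : ℝ → ℝ → ℝ,
        ContDiff ℝ (k : ℕ∞) (fun p : ℝ × ℝ => g p.1 p.2) ∧
        (∀ a b : ℝ, a ≠ b →
          g a b = (f b - f a - deriv f a * (b - a)) / (b - a)^2) ∧
        (∀ a : ℝ, g a a = deriv (deriv f) a / 2)) := by
  have hf'' : Continuous (deriv (deriv f)) := hf2.deriv'.continuous_deriv le_rfl
  refine ⟨fun a b => ?_, abs_taylor_remainder_le hf2 hK, fun hfk => ?_⟩
  · rw [taylor_remainder_eq_integral hf2,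
      integral_integral_eq_integral_sub_mul (by fun_prop : Continuous fun t => _)]
  have hfk'' : ContDiff ℝ k (deriv (deriv f)) :=
    ContDiff.iterate_deriv' k 2 (by exact_mod_cast hfk)
  refine ⟨fun a b => ∫ t in (0:ℝ)..1, (1 - t) * deriv (deriv f) (a + t * (b - a)), ?_,
    fun a b hab => ?_, fun a => ?_⟩
  · exact contDiff_intervalIntegral_of_contDiff_uncurry
      (F := fun (p : ℝ × ℝ) t => (1 - t) * deriv (deriv f) (p.1 + t * (p.2 - p.1)))
      (by fun_prop) 0 1
  · rw [taylor_remainder_eq_integral hf2,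
      mul_div_cancel_left₀ _ (pow_ne_zero 2 (sub_ne_zero.2 hab.symm))]
  · simp only [sub_self, mul_zero, add_zero]
    rw [integral_mul_const, integral_one_sub]
    ring
end
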